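/- Let r > 0 and h < 0. Then the homogeneous state e₃ is not a local minimizer of E_{r,h} in M': for every δ > 0 there exists n ∈ M' with 0 < d_{M'}(n, e₃) ≤ δ and E_{r,h}[n] < E_{r,h}[e₃] = 0. -/

import Mathlib

open MeasureTheory Filter
open scoped RealInnerProductSpace ENNReal Topology

noncomputable section

abbrev E3 : Type := EuclideanSpace ℝ (Fin 3)
abbrev Pt : Type := ℝ × ℝ

/-- Build a vector in `ℝ³`. -/
def mk3 (a b c : ℝ) : E3 := (WithLp.equiv 2 (Fin 3 → ℝ)).symm ![a, b, c]

/-- The third standard basis vector `e₃`. -/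
def e3 : E3 := mk3 0 0 1

/-- Cross product on `ℝ³`. -/
def cross3 (u v : E3) : E3 :=
  mk3 (u 1 * v 2 - u 2 * v 1) (u 2 * v 0 - u 0 * v 2) (u 0 * v 1 - u 1 * v 0)

/-- `g` is the weak partial derivative of `f` in the direction `v`. -/
def IsWeakDeriv (v : Pt) (f g : Pt → E3) : Prop :=
  LocallyIntegrable f volume ∧ LocallyIntegrable g volume ∧
    ∀ φ : Pt → ℝ, ContDiff ℝ (⊤ : ℕ∞) φ → HasCompactSupport φ →
      ∫ x : Pt, fderiv ℝ φ x v • f x = -∫ x : Pt, φ x • g x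

/-- A sphere-valued map `ℝ² → S²` together with its weak partial derivatives. -/
structure SMap where
  f : Pt → E3
  sphere : ∀ᵐ x : Pt ∂volume, ‖f x‖ = 1
  d1 : Pt → E3
  d2 : Pt → E3
  hd1 : IsWeakDeriv (1, 0) f d1
  hd2 : IsWeakDeriv (0, 1) f d2

/-- Squared length of the gradient, `|∇n|²`. -/
def gradSq (n : SMap) (x : Pt) : ℝ := ‖n.d1 x‖ ^ 2 + ‖n.d2 x‖ ^ 2

/-- Dirichlet energy `D[n]`. -/
def Dir (n : SMap) : ℝ := (1 / 2) * ∫ x : Pt, gradSq n x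

/-- Potential `V[n]`. -/
def Pot (n : SMap) : ℝ := (1 / 8) * ∫ x : Pt, ‖n.f x - e3‖ ^ 4

/-- The curl `(∂₁, ∂₂, 0)ᵀ × n`. -/
def curl (n : SMap) (x : Pt) : E3 :=
  mk3 (n.d2 x 2) (-(n.d1 x 2)) (n.d1 x 1 - n.d2 x 0)

/-- Helicity `H[n]`. -/
def Hel (n : SMap) : ℝ := ∫ x : Pt, ⟪n.f x - e3, curl n x⟫

/-- The Landau–Lifshitz energy `E_r[n] = D[n] + r H[n] + V[n]`. -/
def En (r : ℝ) (n : SMap) : ℝ := Dir n + r * Hel n + Pot n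

/-- Topological degree `Q[n]`. -/
def Qdeg (n : SMap) : ℝ :=
  (1 / (4 * Real.pi)) * ∫ x : Pt, ⟪n.f x, cross3 (n.d1 x) (n.d2 x)⟫

/-- Membership in the energy space `M` (`D[n] + V[n] < ∞`). -/
def MemM (n : SMap) : Prop :=
  Integrable (fun x : Pt => gradSq n x) volume ∧
    Integrable (fun x : Pt => ‖n.f x - e3‖ ^ 4) volume

/-- Membership in `M_k`. -/
def MemMk (k : ℤ) (n : SMap) : Prop := MemM n ∧ Qdeg n = (k : ℝ)


/-- Zeeman energy `Z[n]`. -/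
def Zee (n : SMap) : ℝ := ∫ x : Pt, (1 - n.f x 2)

/-- Perturbed energy `E_{r,h}[n] = D[n] + r H[n] + V[n] + h Z[n]`. -/
def Enh (r h : ℝ) (n : SMap) : ℝ := En r n + h * Zee n

/-- Membership in the energy space `M'` (`D[n] + Z[n] < ∞`). -/
def MemM' (n : SMap) : Prop :=
  Integrable (fun x : Pt => gradSq n x) volume ∧
    Integrable (fun x : Pt => 1 - n.f x 2) volume

/-- The distance `d_{M'}(n, e₃) = ‖n − e₃‖_{L²} + ‖∇(n − e₃)‖_{L²}` (valued in `ℝ≥0∞`). -/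
def dMe3 (n : SMap) : ℝ≥0∞ :=
  eLpNorm (fun x : Pt => n.f x - e3) 2 volume +
    (∫⁻ x : Pt, ENNReal.ofReal (gradSq n x)) ^ (1 / 2 : ℝ)

namespace NotMinAux

open Real Function Metric

lemma mk3_apply_zero (a b c : ℝ) : mk3 a b c 0 = a := rfl
lemma mk3_apply_one (a b c : ℝ) : mk3 a b c 1 = b := rfl
lemma mk3_apply_two (a b c : ℝ) : mk3 a b c 2 = c := rfl

lemma norm_mk3_sq (a b c : ℝ) : ‖mk3 a b c‖ ^ 2 = a ^ 2 + b ^ 2 + c ^ 2 := by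
  rw [EuclideanSpace.norm_eq, Real.sq_sqrt (by positivity)]
  simp [Fin.sum_univ_three, mk3_apply_zero, mk3_apply_one, mk3_apply_two]

lemma inner_mk3 (a b c a' b' c' : ℝ) :
    ⟪mk3 a b c, mk3 a' b' c'⟫ = a * a' + b * b' + c * c' := by
  simp [PiLp.inner_apply, Fin.sum_univ_three, mk3_apply_zero, mk3_apply_one, mk3_apply_two,
    RCLike.inner_apply]
  ring

lemma mk3_sub (a b c a' b' c' : ℝ) : mk3 a b c - mk3 a' b' c' = mk3 (a-a') (b-b') (c-c') := by
  ext i; fin_cases i <;> simp [PiLp.sub_apply, mk3_apply_zero, mk3_apply_one, mk3_apply_two]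

def u1 : E3 := mk3 1 0 0

lemma mk3_zero : mk3 0 0 0 = (0 : E3) := by
  ext i; fin_cases i <;> rfl

lemma smul_u1_add_smul_e3 (a c : ℝ) : a • u1 + c • e3 = mk3 a 0 c := by
  ext i
  fin_cases i <;>
    simp [u1, e3, PiLp.add_apply, PiLp.smul_apply, mk3_apply_zero, mk3_apply_one, mk3_apply_two]

/-- The basic bump function on `ℝ`: equal to 1 on `[-1,1]`, supported in `(-2,2)`. -/
def bump : ContDiffBump (0 : ℝ) := ⟨1, 2, one_pos, one_lt_two⟩

lemma bump_contDiff : ContDiff ℝ (⊤:ℕ∞) bump := bump.contDiff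

lemma bump_deriv_continuous : Continuous (deriv bump) :=
  bump_contDiff.continuous_deriv (by exact_mod_cast le_top)


section Profile

variable (R ε : ℝ)

def c (t : ℝ) : ℝ := bump (t / R)

def c' (t : ℝ) : ℝ := deriv bump (t / R) * (1 / R)

lemma c_cont : Continuous (c R) := bump.continuous.comp (continuous_id.div_const R)

lemma c'_cont : Continuous (c' R) :=
  (bump_deriv_continuous.comp (continuous_id.div_const R)).mul continuous_const

lemma c_nonneg (t : ℝ) : 0 ≤ c R t := bump.nonneg

lemma c_le_one (t : ℝ) : c R t ≤ 1 := bump.le_one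

lemma c_zero : c R 0 = 1 := by
  have : (0:ℝ)/R ∈ closedBall (0:ℝ) bump.rIn := by
    simp [bump]
  simpa [c] using bump.one_of_mem_closedBall this

lemma hasDerivAt_c (hR : R ≠ 0) (t : ℝ) : HasDerivAt (c R) (c' R t) t := by
  have h1 : HasDerivAt (fun s : ℝ => s / R) (1 / R) t := by
    simpa using (hasDerivAt_id t).div_const R
  have h2 : HasDerivAt bump (deriv bump (t / R)) (t / R) :=
    ((bump_contDiff.differentiable (by simp)) (t / R)).hasDerivAt
  exact h2.comp t h1

lemma c_eq_zero (hR : 0 < R) {t : ℝ} (ht : 3 * R < |t|) : c R t = 0 := by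
  apply bump.zero_of_le_dist
  have : bump.rOut = 2 := rfl
  rw [this, Real.dist_eq, sub_zero, abs_div, abs_of_pos hR, le_div_iff₀ hR]
  nlinarith [abs_nonneg t]

lemma c'_eq_zero (hR : 0 < R) {t : ℝ} (ht : 3 * R < |t|) : c' R t = 0 := by
  have h : t / R ∉ tsupport (⇑bump) := by
    rw [bump.tsupport_eq, show bump.rOut = 2 from rfl]
    simp only [mem_closedBall, Real.dist_eq, sub_zero, not_le, abs_div, abs_of_pos hR,
      lt_div_iff₀ hR]
    nlinarith [abs_nonneg t]
    
  have := support_deriv_subset (f := (⇑bump : ℝ → ℝ))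
  have hz : deriv bump (t / R) = 0 := by
    by_contra hne
    exact h (this hne)
  simp [c', hz]

lemma c_hcs (hR : 0 < R) : HasCompactSupport (c R) := by
  apply HasCompactSupport.intro (isCompact_closedBall (0:ℝ) (3*R))
  intro t ht
  refine c_eq_zero R hR ?_
  simpa [Real.dist_eq] using ht

lemma c'_hcs (hR : 0 < R) : HasCompactSupport (c' R) := by
  apply HasCompactSupport.intro (isCompact_closedBall (0:ℝ) (3*R))
  intro t ht
  refine c'_eq_zero R hR ?_
  simpa [Real.dist_eq] using ht

def th (p : Pt) : ℝ := ε * (c R p.1 * c R p.2)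

def th1 (p : Pt) : ℝ := ε * (c' R p.1 * c R p.2)

def th2 (p : Pt) : ℝ := ε * (c R p.1 * c' R p.2)

def thd (p : Pt) : Pt →L[ℝ] ℝ :=
  th1 R ε p • ContinuousLinearMap.fst ℝ ℝ ℝ + th2 R ε p • ContinuousLinearMap.snd ℝ ℝ ℝ

lemma thd_apply (p v : Pt) : thd R ε p v = th1 R ε p * v.1 + th2 R ε p * v.2 := by
  simp [thd]

lemma hasFDerivAt_th (hR : R ≠ 0) (p : Pt) : HasFDerivAt (th R ε) (thd R ε p) p := by
  have hx : HasFDerivAt (fun q : Pt => c R q.1)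
      (c' R p.1 • ContinuousLinearMap.fst ℝ ℝ ℝ) p :=
    (hasDerivAt_c R hR p.1).comp_hasFDerivAt p hasFDerivAt_fst
  have hy : HasFDerivAt (fun q : Pt => c R q.2)
      (c' R p.2 • ContinuousLinearMap.snd ℝ ℝ ℝ) p :=
    (hasDerivAt_c R hR p.2).comp_hasFDerivAt p hasFDerivAt_snd
  have := (hx.mul hy).const_mul ε
  refine this.congr_fderiv ?_
  apply ContinuousLinearMap.ext
  intro v
  simp [thd, th1, th2]
  ring

def fmap (p : Pt) : E3 := Real.sin (th R ε p) • u1 + Real.cos (th R ε p) • e3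

def dvec (t : Pt → ℝ) (p : Pt) : E3 :=
  (Real.cos (th R ε p) * t p) • u1 + (-Real.sin (th R ε p) * t p) • e3

def Dmap (p : Pt) : Pt →L[ℝ] E3 :=
  (thd R ε p).smulRight (Real.cos (th R ε p) • u1 + (-Real.sin (th R ε p)) • e3)

lemma hasFDerivAt_fmap (hR : R ≠ 0) (p : Pt) : HasFDerivAt (fmap R ε) (Dmap R ε p) p := by
  have hs : HasFDerivAt (fun q : Pt => Real.sin (th R ε q))
      (Real.cos (th R ε p) • thd R ε p) p :=
    (Real.hasDerivAt_sin (th R ε p)).comp_hasFDerivAt p (hasFDerivAt_th R ε hR p)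
  have hc : HasFDerivAt (fun q : Pt => Real.cos (th R ε q))
      ((-Real.sin (th R ε p)) • thd R ε p) p :=
    (Real.hasDerivAt_cos (th R ε p)).comp_hasFDerivAt p (hasFDerivAt_th R ε hR p)
  have := (hs.smul_const u1).add (hc.smul_const e3)
  refine this.congr_fderiv ?_
  apply ContinuousLinearMap.ext
  intro v
  simp [Dmap, smul_add, smul_smul]
  module

lemma Dmap_one_zero (p : Pt) : Dmap R ε p (1, 0) = dvec R ε (th1 R ε) p := by
  simp [Dmap, dvec, thd_apply, smul_add, smul_smul]
  module

lemma Dmap_zero_one (p : Pt) : Dmap R ε p (0, 1) = dvec R ε (th2 R ε) p := by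
  simp [Dmap, dvec, thd_apply, smul_add, smul_smul]
  module


lemma th_cont : Continuous (th R ε) :=
  continuous_const.mul (((c_cont R).comp continuous_fst).mul ((c_cont R).comp continuous_snd))

lemma th1_cont : Continuous (th1 R ε) :=
  continuous_const.mul (((c'_cont R).comp continuous_fst).mul ((c_cont R).comp continuous_snd))

lemma th2_cont : Continuous (th2 R ε) :=
  continuous_const.mul (((c_cont R).comp continuous_fst).mul ((c'_cont R).comp continuous_snd))

/-- The compact set outside which everything vanishes. -/
def K : Set Pt := closedBall (0:ℝ) (3*R) ×ˢ closedBall (0:ℝ) (3*R)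

lemma K_compact : IsCompact (K R) :=
  (isCompact_closedBall _ _).prod (isCompact_closedBall _ _)

lemma vanish (hR : 0 < R) {p : Pt} (hp : p ∉ K R) :
    th R ε p = 0 ∧ th1 R ε p = 0 ∧ th2 R ε p = 0 := by
  have hp' : p.1 ∉ closedBall (0:ℝ) (3*R) ∨ p.2 ∉ closedBall (0:ℝ) (3*R) := by
    by_contra hcon
    push_neg at hcon
    exact hp (Set.mk_mem_prod hcon.1 hcon.2)
  rcases hp' with h | h
  · have h1 : 3 * R < |p.1| := by simpa [Real.dist_eq] using h
    have hc : c R p.1 = 0 := c_eq_zero R hR h1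
    have hc' : c' R p.1 = 0 := c'_eq_zero R hR h1
    refine ⟨?_, ?_, ?_⟩ <;> simp [th, th1, th2, hc, hc']
  · have h1 : 3 * R < |p.2| := by simpa [Real.dist_eq] using h
    have hc : c R p.2 = 0 := c_eq_zero R hR h1
    have hc' : c' R p.2 = 0 := c'_eq_zero R hR h1
    refine ⟨?_, ?_, ?_⟩ <;> simp [th, th1, th2, hc, hc']

lemma fmap_cont : Continuous (fmap R ε) :=
  ((Real.continuous_sin.comp (th_cont R ε)).smul continuous_const).add
    ((Real.continuous_cos.comp (th_cont R ε)).smul continuous_const)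

lemma dvec_cont {t : Pt → ℝ} (ht : Continuous t) : Continuous (dvec R ε t) :=
  (((Real.continuous_cos.comp (th_cont R ε)).mul ht).smul continuous_const).add
    ((((Real.continuous_sin.comp (th_cont R ε)).neg).mul ht).smul continuous_const)


lemma fmap_eq (p : Pt) :
    fmap R ε p = mk3 (Real.sin (th R ε p)) 0 (Real.cos (th R ε p)) :=
  smul_u1_add_smul_e3 _ _

lemma dvec_eq (t : Pt → ℝ) (p : Pt) :
    dvec R ε t p = mk3 (Real.cos (th R ε p) * t p) 0 (-Real.sin (th R ε p) * t p) :=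
  smul_u1_add_smul_e3 _ _

lemma fmap_sub_e3 (p : Pt) :
    fmap R ε p - e3 = mk3 (Real.sin (th R ε p)) 0 (Real.cos (th R ε p) - 1) := by
  rw [fmap_eq, e3, mk3_sub]
  norm_num

lemma Dmapv_cont (v : Pt) : Continuous (fun p => Dmap R ε p v) := by
  have : (fun p => Dmap R ε p v) = fun p =>
      (th1 R ε p * v.1 + th2 R ε p * v.2) •
        (Real.cos (th R ε p) • u1 + (-Real.sin (th R ε p)) • e3) := by
    funext p
    simp [Dmap, thd_apply]
  rw [this]
  exact (((th1_cont R ε).mul continuous_const).add ((th2_cont R ε).mul continuous_const)).smul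
    (((Real.continuous_cos.comp (th_cont R ε)).smul continuous_const).add
      (((Real.continuous_sin.comp (th_cont R ε)).neg).smul continuous_const))

lemma hcs_of_vanishK {X : Type*} [Zero X] {G : Pt → X}
    (h0 : ∀ p : Pt, p ∉ K R → G p = 0) : HasCompactSupport G :=
  HasCompactSupport.intro (K_compact R) h0

lemma integrable_of_vanishK {X : Type*} [NormedAddCommGroup X] {G : Pt → X}
    (hG : Continuous G) (h0 : ∀ p : Pt, p ∉ K R → G p = 0) : Integrable G volume :=
  hG.integrable_of_hasCompactSupport (hcs_of_vanishK R h0)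

lemma F_vanish (hR : 0 < R) {p : Pt} (hp : p ∉ K R) : fmap R ε p - e3 = 0 := by
  rw [fmap_sub_e3, (vanish R ε hR hp).1]
  norm_num
  exact mk3_zero

lemma hcs_smul_right {X : Type*} [NormedAddCommGroup X] [NormedSpace ℝ X] {f : Pt → ℝ}
    {g : Pt → X} (hf : HasCompactSupport f) : HasCompactSupport fun x => f x • g x :=
  HasCompactSupport.smul_right (f' := g) hf

lemma hcs_smul_left {X : Type*} [NormedAddCommGroup X] [NormedSpace ℝ X] {f : Pt → ℝ}
    {g : Pt → X} (hg : HasCompactSupport g) : HasCompactSupport fun x => f x • g x :=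
  HasCompactSupport.smul_left (f := f) hg

lemma ibp_zero {u : Pt → ℝ} (hu : ContDiff ℝ (⊤:ℕ∞) u) (hcs : HasCompactSupport u) (v : Pt) :
    ∫ x : Pt, fderiv ℝ u x v = 0 := by
  have hder : Continuous fun x : Pt => fderiv ℝ u x v :=
    (hu.continuous_fderiv (by simp)).clm_apply continuous_const
  have hdercs : HasCompactSupport fun x : Pt => fderiv ℝ u x v := by
    have h1 : HasCompactSupport (fderiv ℝ u) := hcs.fderiv (𝕜 := ℝ)
    exact h1.comp_left (g := fun L : Pt →L[ℝ] ℝ => L v) rfl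
  have h := integral_mul_fderiv_eq_neg_fderiv_mul_of_integrable (μ := volume)
    (f := fun _ : Pt => (1:ℝ)) (g := u) (v := v)
    (((integrable_zero Pt ℝ volume).congr (Filter.Eventually.of_forall fun x => by
      simp [fderiv_fun_const])))
    (by simpa using hder.integrable_of_hasCompactSupport hdercs)
    (by simpa using hu.continuous.integrable_of_hasCompactSupport hcs)
    (fun x _ => differentiableAt_const (1:ℝ)) (fun x _ => hu.differentiable (by simp) x)
  simpa [fderiv_fun_const] using h

lemma weakDeriv (hR : 0 < R) (v : Pt) :
    IsWeakDeriv v (fmap R ε) (fun p => Dmap R ε p v) := by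
  refine ⟨(fmap_cont R ε).locallyIntegrable, ((Dmapv_cont R ε v).locallyIntegrable), ?_⟩
  intro φ hφ hφc
  set F : Pt → E3 := fun p => fmap R ε p - e3 with hF
  have hFcont : Continuous F := (fmap_cont R ε).sub continuous_const
  have hFcs : HasCompactSupport F := hcs_of_vanishK R fun p hp => F_vanish R ε hR hp
  have hφcont : Continuous φ := hφ.continuous
  have hφ'cont : Continuous fun x : Pt => fderiv ℝ φ x v :=
    (hφ.continuous_fderiv (by simp)).clm_apply continuous_const
  have hφ'cs : HasCompactSupport fun x : Pt => fderiv ℝ φ x v :=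
    (hφc.fderiv (𝕜 := ℝ)).comp_left (g := fun L : Pt →L[ℝ] ℝ => L v) rfl
  have hFder : ∀ p, fderiv ℝ F p = Dmap R ε p := fun p =>
    (((hasFDerivAt_fmap R ε hR.ne' p).sub_const e3).fderiv)
  -- integration by parts for φ and F
  have ibp := integral_smul_fderiv_eq_neg_fderiv_smul_of_integrable (μ := volume)
    (f := φ) (g := F) (v := v)
    ((hφ'cont.smul hFcont).integrable_of_hasCompactSupport (hcs_smul_right hφ'cs))
    (by
      refine (hφcont.smul ?_).integrable_of_hasCompactSupport (hcs_smul_right hφc)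
      · exact Continuous.congr (Dmapv_cont R ε v) fun p => by rw [hFder p])
    ((hφcont.smul hFcont).integrable_of_hasCompactSupport (hcs_smul_right hφc))
    (fun x _ => hφ.differentiable (by simp) x)
    (fun p _ => ((hasFDerivAt_fmap R ε hR.ne' p).sub_const e3).differentiableAt)
  -- now compute
  have split : ∀ x : Pt, fderiv ℝ φ x v • fmap R ε x
      = fderiv ℝ φ x v • F x + fderiv ℝ φ x v • e3 := by
    intro x
    rw [hF, smul_sub]
    abel
  have ibp' : ∫ x : Pt, fderiv ℝ φ x v • F x = - ∫ x : Pt, φ x • fderiv ℝ F x v := by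
    rw [ibp, neg_neg]
  rw [integral_congr_ae (Filter.Eventually.of_forall split), integral_add
    (f := fun x => fderiv ℝ φ x v • F x) (g := fun x => fderiv ℝ φ x v • e3)
    ((hφ'cont.smul hFcont).integrable_of_hasCompactSupport (hcs_smul_right hφ'cs))
    ((hφ'cont.smul continuous_const).integrable_of_hasCompactSupport (hcs_smul_right hφ'cs)),
    integral_smul_const, ibp_zero (hφ.of_le (by simp)) hφc v, zero_smul, add_zero, ibp']
  rw [neg_inj]
  refine integral_congr_ae (Filter.Eventually.of_forall fun x => ?_)
  simp only []
  rw [hFder x]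

lemma hd1' (hR : 0 < R) : IsWeakDeriv (1, 0) (fmap R ε) (dvec R ε (th1 R ε)) := by
  have h := weakDeriv R ε hR (1, 0)
  rwa [show (fun p => Dmap R ε p (1,0)) = dvec R ε (th1 R ε) from funext (Dmap_one_zero R ε)] at h

lemma hd2' (hR : 0 < R) : IsWeakDeriv (0, 1) (fmap R ε) (dvec R ε (th2 R ε)) := by
  have h := weakDeriv R ε hR (0, 1)
  rwa [show (fun p => Dmap R ε p (0,1)) = dvec R ε (th2 R ε) from funext (Dmap_zero_one R ε)] at h

/-- The sphere-valued trial map. -/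
def nmap (hR : 0 < R) : SMap where
  f := fmap R ε
  sphere := by
    refine Filter.Eventually.of_forall fun p => ?_
    have h : ‖fmap R ε p‖ ^ 2 = 1 := by
      rw [fmap_eq, norm_mk3_sq]
      have := Real.sin_sq_add_cos_sq (th R ε p)
      nlinarith
    nlinarith [norm_nonneg (fmap R ε p)]
  d1 := dvec R ε (th1 R ε)
  d2 := dvec R ε (th2 R ε)
  hd1 := hd1' R ε hR
  hd2 := hd2' R ε hR


lemma one_sub_cos_le (t : ℝ) : 1 - Real.cos t ≤ t ^ 2 / 2 := by
  nlinarith [Real.one_sub_sq_div_two_le_cos (x := t)]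

lemma one_sub_cos_ge {t : ℝ} (ht : |t| ≤ 1) : t ^ 2 / 5 ≤ 1 - Real.cos t := by
  have hpi : |t| ≤ Real.pi := le_trans ht (by nlinarith [Real.pi_gt_three])
  have h := Real.cos_le_one_sub_mul_cos_sq hpi
  have hpi2 : Real.pi ^ 2 < 10 := by nlinarith [Real.pi_lt_d2, Real.pi_gt_three]
  have hpos : (0:ℝ) < Real.pi ^ 2 := by positivity
  have h2 : (1:ℝ) / 5 * t ^ 2 ≤ 2 / Real.pi ^ 2 * t ^ 2 := by
    apply mul_le_mul_of_nonneg_right _ (sq_nonneg t)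
    rw [div_le_div_iff₀ (by norm_num) hpos]
    nlinarith
  nlinarith

def Ib : ℝ := ∫ t : ℝ, bump t ^ 2

def Ib' : ℝ := ∫ t : ℝ, deriv bump t ^ 2

lemma bump_sq_integrable : Integrable (fun t : ℝ => bump t ^ 2) :=
  ((bump.continuous).pow 2).integrable_of_hasCompactSupport
    (bump.hasCompactSupport.comp_left (g := fun y : ℝ => y ^ 2) (by norm_num) :)

lemma bump_deriv_sq_integrable : Integrable (fun t : ℝ => deriv bump t ^ 2) :=
  (bump_deriv_continuous.pow 2).integrable_of_hasCompactSupport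
    ((bump.hasCompactSupport.deriv).comp_left (g := fun y : ℝ => y ^ 2) (by norm_num) :)

lemma Ib_pos : 0 < Ib := by
  rw [Ib, integral_pos_iff_support_of_nonneg_ae
    (Filter.Eventually.of_forall fun t => sq_nonneg (bump t)) bump_sq_integrable]
  have hsupp : (Function.support fun t : ℝ => bump t ^ 2) = Metric.ball (0:ℝ) 2 := by
    rw [show (2:ℝ) = bump.rOut from rfl, ← bump.support_eq]
    ext t
    simp [Function.mem_support, pow_eq_zero_iff]
  rw [hsupp]
  exact measure_ball_pos _ _ (by norm_num)



lemma int_c_sq (hR : 0 < R) : ∫ t : ℝ, c R t ^ 2 = R * Ib := by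
  have := MeasureTheory.Measure.integral_comp_div (fun t : ℝ => bump t ^ 2) R
  simpa [c, abs_of_pos hR, smul_eq_mul, Ib] using this

lemma int_c'_sq (hR : 0 < R) : ∫ t : ℝ, c' R t ^ 2 = Ib' / R := by
  have h0 : ∀ t : ℝ, c' R t ^ 2 = (1 / R ^ 2) * (deriv bump (t / R)) ^ 2 := by
    intro t; rw [c']; ring
  rw [funext h0, integral_const_mul]
  have := MeasureTheory.Measure.integral_comp_div (fun t : ℝ => deriv bump t ^ 2) R
  rw [this, abs_of_pos hR, smul_eq_mul, ← Ib']
  field_simp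


lemma prod_int {g k : ℝ → ℝ} (hg : Integrable g) (hk : Integrable k) :
    ∫ p : Pt, g p.1 * k p.2 = (∫ t : ℝ, g t) * ∫ t : ℝ, k t := by
  exact integral_prod_mul g k

lemma prod_int_integrable {g k : ℝ → ℝ} (hg : Integrable g) (hk : Integrable k) :
    Integrable (fun p : Pt => g p.1 * k p.2) volume :=
  Integrable.mul_prod hg hk

lemma c_sq_integrable (hR : 0 < R) : Integrable (fun t : ℝ => c R t ^ 2) :=
  ((c_cont R).pow 2).integrable_of_hasCompactSupport
    ((c_hcs R hR).comp_left (g := fun y : ℝ => y ^ 2) (by norm_num) :)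

lemma c'_sq_integrable (hR : 0 < R) : Integrable (fun t : ℝ => c' R t ^ 2) :=
  ((c'_cont R).pow 2).integrable_of_hasCompactSupport
    ((c'_hcs R hR).comp_left (g := fun y : ℝ => y ^ 2) (by norm_num) :)

lemma norm_dvec_sq (t : Pt → ℝ) (p : Pt) : ‖dvec R ε t p‖ ^ 2 = t p ^ 2 := by
  rw [dvec_eq, norm_mk3_sq]
  nlinarith [Real.sin_sq_add_cos_sq (th R ε p)]

lemma gradSq_nmap (hR : 0 < R) (p : Pt) :
    gradSq (nmap R ε hR) p = th1 R ε p ^ 2 + th2 R ε p ^ 2 := by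
  show ‖dvec R ε (th1 R ε) p‖ ^ 2 + ‖dvec R ε (th2 R ε) p‖ ^ 2 = _
  rw [norm_dvec_sq, norm_dvec_sq]

lemma gradSq_integrable (hR : 0 < R) :
    Integrable (fun p : Pt => gradSq (nmap R ε hR) p) := by
  apply integrable_of_vanishK R
  · rw [funext (gradSq_nmap R ε hR)]
    exact (((th1_cont R ε).pow 2).add ((th2_cont R ε).pow 2))
  · intro p hp
    rw [gradSq_nmap, (vanish R ε hR hp).2.1, (vanish R ε hR hp).2.2]
    norm_num

lemma int_gradSq (hR : 0 < R) :
    ∫ p : Pt, gradSq (nmap R ε hR) p = 2 * ε ^ 2 * (Ib' * Ib) := by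
  rw [integral_congr_ae (Filter.Eventually.of_forall (gradSq_nmap R ε hR))]
  have h1 : ∀ p : Pt, th1 R ε p ^ 2 = ε ^ 2 • ((fun t => c' R t ^ 2) p.1 * (fun t => c R t ^ 2) p.2) := by
    intro p; simp only [th1, smul_eq_mul]; ring
  have h2 : ∀ p : Pt, th2 R ε p ^ 2 = ε ^ 2 • ((fun t => c R t ^ 2) p.1 * (fun t => c' R t ^ 2) p.2) := by
    intro p; simp only [th2, smul_eq_mul]; ring
  rw [integral_add, funext h1, funext h2, integral_smul, integral_smul,
    prod_int (c'_sq_integrable R hR) (c_sq_integrable R hR),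
    prod_int (c_sq_integrable R hR) (c'_sq_integrable R hR),
    int_c_sq R hR, int_c'_sq R hR]
  · field_simp
    ring
  · rw [funext h1]
    exact (prod_int_integrable (c'_sq_integrable R hR) (c_sq_integrable R hR)).smul (ε ^ 2)
  · rw [funext h2]
    exact (prod_int_integrable (c_sq_integrable R hR) (c'_sq_integrable R hR)).smul (ε ^ 2)

lemma Dir_nmap (hR : 0 < R) : Dir (nmap R ε hR) = ε ^ 2 * (Ib' * Ib) := by
  rw [Dir, int_gradSq R ε hR]
  ring


lemma th_nonneg (hε : 0 ≤ ε) (p : Pt) : 0 ≤ th R ε p :=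
  mul_nonneg hε (mul_nonneg (c_nonneg R _) (c_nonneg R _))

lemma th_le (hε : 0 ≤ ε) (p : Pt) : th R ε p ≤ ε := by
  have h := mul_le_one₀ (c_le_one R p.1) (c_nonneg R p.2) (c_le_one R p.2)
  calc th R ε p ≤ ε * 1 := mul_le_mul_of_nonneg_left h hε
  _ = ε := mul_one ε

lemma fmap_two (p : Pt) : fmap R ε p 2 = Real.cos (th R ε p) := by
  rw [fmap_eq]; rfl

lemma zee_integrable (hR : 0 < R) :
    Integrable (fun p : Pt => 1 - (nmap R ε hR).f p 2) volume := by
  apply integrable_of_vanishK R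
  · show Continuous fun p : Pt => 1 - fmap R ε p 2
    rw [funext (fun p => congrArg (1 - ·) (fmap_two R ε p))]
    exact continuous_const.sub (Real.continuous_cos.comp (th_cont R ε))
  · intro p hp
    show 1 - fmap R ε p 2 = 0
    rw [fmap_two, (vanish R ε hR hp).1]
    norm_num

lemma th_sq_smul (a : ℝ) :
    (fun p : Pt => a • ((fun t => c R t ^ 2) p.1 * (fun t => c R t ^ 2) p.2))
      = fun p : Pt => a * (c R p.1 ^ 2 * c R p.2 ^ 2) := by
  funext p; simp

lemma int_csq_prod (hR : 0 < R) (a : ℝ) :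
    ∫ p : Pt, a * (c R p.1 ^ 2 * c R p.2 ^ 2) = a * (R * Ib) ^ 2 := by
  rw [← th_sq_smul, integral_smul,
    prod_int (c_sq_integrable R hR) (c_sq_integrable R hR), int_c_sq R hR]
  rw [smul_eq_mul]
  ring

lemma csq_prod_integrable (hR : 0 < R) (a : ℝ) :
    Integrable (fun p : Pt => a * (c R p.1 ^ 2 * c R p.2 ^ 2)) volume := by
  rw [← th_sq_smul]
  exact (prod_int_integrable (c_sq_integrable R hR) (c_sq_integrable R hR)).smul a

lemma Zee_ge (hR : 0 < R) (hε : 0 < ε) (hε1 : ε ≤ 1) :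
    ε ^ 2 / 5 * (R * Ib) ^ 2 ≤ Zee (nmap R ε hR) := by
  rw [Zee, ← int_csq_prod R hR (ε ^ 2 / 5)]
  apply integral_mono (csq_prod_integrable R hR _) (zee_integrable R ε hR)
  intro p
  show ε ^ 2 / 5 * (c R p.1 ^ 2 * c R p.2 ^ 2) ≤ 1 - fmap R ε p 2
  rw [fmap_two]
  have habs : |th R ε p| ≤ 1 := by
    rw [abs_of_nonneg (th_nonneg R ε hε.le p)]
    exact le_trans (th_le R ε hε.le p) hε1
  have := one_sub_cos_ge habs
  have hth : th R ε p ^ 2 = ε ^ 2 * (c R p.1 ^ 2 * c R p.2 ^ 2) := by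
    rw [th]; ring
  nlinarith

lemma norm_fmap_sub_e3_sq (p : Pt) :
    ‖fmap R ε p - e3‖ ^ 2 = 2 * (1 - Real.cos (th R ε p)) := by
  rw [fmap_sub_e3, norm_mk3_sq]
  nlinarith [Real.sin_sq_add_cos_sq (th R ε p)]

lemma pot_integrand_le (hε : 0 < ε) (hε1 : ε ≤ 1) (p : Pt) :
    ‖fmap R ε p - e3‖ ^ 4 ≤ ε ^ 4 * (c R p.1 ^ 2 * c R p.2 ^ 2) := by
  have h2 : ‖fmap R ε p - e3‖ ^ 4 = (2 * (1 - Real.cos (th R ε p))) ^ 2 := by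
    rw [← norm_fmap_sub_e3_sq]; ring
  have hub := one_sub_cos_le (th R ε p)
  have hlb : 0 ≤ 1 - Real.cos (th R ε p) := by
    nlinarith [Real.cos_le_one (th R ε p)]
  have hth : th R ε p ^ 2 = ε ^ 2 * (c R p.1 ^ 2 * c R p.2 ^ 2) := by rw [th]; ring
  have hc4 : th R ε p ^ 4 ≤ ε ^ 4 * (c R p.1 ^ 2 * c R p.2 ^ 2) := by
    have h1 : th R ε p ^ 4 = (th R ε p ^ 2) ^ 2 := by ring
    set s : ℝ := c R p.1 ^ 2 * c R p.2 ^ 2 with hs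
    have hs0 : 0 ≤ s := by positivity
    have hs1 : s ≤ 1 := by
      have h1 : c R p.1 ^ 2 ≤ 1 := pow_le_one₀ (c_nonneg R p.1) (c_le_one R p.1)
      have h2 : c R p.2 ^ 2 ≤ 1 := pow_le_one₀ (c_nonneg R p.2) (c_le_one R p.2)
      calc s ≤ 1 * 1 := mul_le_mul h1 h2 (sq_nonneg _) zero_le_one
      _ = 1 := by norm_num
    have hss : s ^ 2 ≤ s := by nlinarith
    have : (ε ^ 2 * s) ^ 2 = ε ^ 4 * s ^ 2 := by ring
    rw [h1, hth, this]
    have hε4 : (0:ℝ) ≤ ε ^ 4 := by positivity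
    exact mul_le_mul_of_nonneg_left hss hε4
  nlinarith

lemma pot_integrable (hR : 0 < R) :
    Integrable (fun p : Pt => ‖fmap R ε p - e3‖ ^ 4) volume := by
  apply integrable_of_vanishK R
  · exact (((fmap_cont R ε).sub continuous_const).norm.pow 4)
  · intro p hp
    rw [F_vanish R ε hR hp]
    norm_num

lemma Pot_le (hR : 0 < R) (hε : 0 < ε) (hε1 : ε ≤ 1) :
    Pot (nmap R ε hR) ≤ ε ^ 4 * (R * Ib) ^ 2 / 8 := by
  rw [Pot]
  have hint : ∫ p : Pt, ‖fmap R ε p - e3‖ ^ 4 ≤ ε ^ 4 * (R * Ib) ^ 2 := by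
    rw [← int_csq_prod R hR (ε ^ 4)]
    exact integral_mono (pot_integrable R ε hR) (csq_prod_integrable R hR _)
      (pot_integrand_le R ε hε hε1)
  show (1:ℝ)/8 * ∫ p : Pt, ‖(nmap R ε hR).f p - e3‖ ^ 4 ≤ _
  have : ∫ p : Pt, ‖(nmap R ε hR).f p - e3‖ ^ 4 = ∫ p : Pt, ‖fmap R ε p - e3‖ ^ 4 := rfl
  rw [this]
  linarith

lemma int_norm_sq_le (hR : 0 < R) :
    ∫ p : Pt, ‖fmap R ε p - e3‖ ^ 2 ≤ ε ^ 2 * (R * Ib) ^ 2 := by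
  rw [← int_csq_prod R hR (ε ^ 2)]
  apply integral_mono ?_ (csq_prod_integrable R hR _)
  · intro p
    dsimp only
    rw [norm_fmap_sub_e3_sq]
    have hub := one_sub_cos_le (th R ε p)
    have hth : th R ε p ^ 2 = ε ^ 2 * (c R p.1 ^ 2 * c R p.2 ^ 2) := by rw [th]; ring
    nlinarith
  · apply integrable_of_vanishK R
    · exact ((fmap_cont R ε).sub continuous_const).norm.pow 2
    · intro p hp
      rw [F_vanish R ε hR hp]
      norm_num

lemma norm_sq_integrable (hR : 0 < R) :
    Integrable (fun p : Pt => ‖fmap R ε p - e3‖ ^ 2) volume := by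
  apply integrable_of_vanishK R
  · exact ((fmap_cont R ε).sub continuous_const).norm.pow 2
  · intro p hp
    rw [F_vanish R ε hR hp]
    norm_num

lemma c_contDiff : ContDiff ℝ (⊤:ℕ∞) (c R) :=
  bump_contDiff.comp (contDiff_id.div_const R)

lemma th_contDiff : ContDiff ℝ (⊤:ℕ∞) (th R ε) :=
  contDiff_const.mul (((c_contDiff R).comp contDiff_fst).mul ((c_contDiff R).comp contDiff_snd))

lemma hel_integrand (hR : 0 < R) (p : Pt) :
    ⟪(nmap R ε hR).f p - e3, curl (nmap R ε hR) p⟫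
      = (Real.cos (th R ε p) - 1) * th2 R ε p := by
  have hcurl : curl (nmap R ε hR) p =
      mk3 (-Real.sin (th R ε p) * th2 R ε p) (-(-Real.sin (th R ε p) * th1 R ε p))
        (0 - Real.cos (th R ε p) * th2 R ε p) := by
    show mk3 ((nmap R ε hR).d2 p 2) (-((nmap R ε hR).d1 p 2))
        ((nmap R ε hR).d1 p 1 - (nmap R ε hR).d2 p 0) = _
    have hd1 : (nmap R ε hR).d1 p = dvec R ε (th1 R ε) p := rfl
    have hd2 : (nmap R ε hR).d2 p = dvec R ε (th2 R ε) p := rfl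
    rw [hd1, hd2, dvec_eq, dvec_eq, mk3_apply_two, mk3_apply_two, mk3_apply_one, mk3_apply_zero]
  have hf : (nmap R ε hR).f p - e3
      = mk3 (Real.sin (th R ε p)) 0 (Real.cos (th R ε p) - 1) := fmap_sub_e3 R ε p
  rw [hf, hcurl, inner_mk3]
  linear_combination (-(th2 R ε p)) * Real.sin_sq_add_cos_sq (th R ε p)

lemma Hel_nmap (hR : 0 < R) : Hel (nmap R ε hR) = 0 := by
  set G : Pt → ℝ := fun p => Real.sin (th R ε p) - th R ε p with hGdef
  have hG : ContDiff ℝ (⊤:ℕ∞) G :=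
    (Real.contDiff_sin.comp (th_contDiff R ε)).sub (th_contDiff R ε)
  have hGcs : HasCompactSupport G := by
    apply hcs_of_vanishK R
    intro p hp
    simp [hGdef, (vanish R ε hR hp).1]
  have hGder : ∀ p : Pt, HasFDerivAt G ((Real.cos (th R ε p) - 1) • thd R ε p) p := by
    intro p
    have h1 : HasFDerivAt (fun q : Pt => Real.sin (th R ε q))
        (Real.cos (th R ε p) • thd R ε p) p :=
      (Real.hasDerivAt_sin (th R ε p)).comp_hasFDerivAt p (hasFDerivAt_th R ε hR.ne' p)
    have h2 := h1.sub (hasFDerivAt_th R ε hR.ne' p)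
    have h3 : (Real.cos (th R ε p) - 1) • thd R ε p
        = Real.cos (th R ε p) • thd R ε p - thd R ε p := by
      apply ContinuousLinearMap.ext
      intro v
      simp [sub_smul]
      ring
    rw [h3]
    exact h2
  have key : ∀ p : Pt, ⟪(nmap R ε hR).f p - e3, curl (nmap R ε hR) p⟫
      = fderiv ℝ G p (0, 1) := by
    intro p
    rw [(hGder p).fderiv, hel_integrand R ε hR p]
    simp [thd_apply]
  rw [Hel, integral_congr_ae (Filter.Eventually.of_forall key), ibp_zero hG hGcs (0,1)]

lemma memM'_nmap (hR : 0 < R) : MemM' (nmap R ε hR) :=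
  ⟨gradSq_integrable R ε hR, zee_integrable R ε hR⟩


lemma Ib'_nonneg : 0 ≤ Ib' := integral_nonneg fun t => sq_nonneg _

lemma T1_le (hR : 0 < R) (hε : 0 ≤ ε) :
    eLpNorm (fun p : Pt => (nmap R ε hR).f p - e3) 2 volume
      ≤ ENNReal.ofReal (ε * (R * Ib)) := by
  have hg : (fun p : Pt => (nmap R ε hR).f p - e3) = fun p : Pt => fmap R ε p - e3 := rfl
  rw [hg, eLpNorm_eq_lintegral_rpow_enorm_toReal two_ne_zero ENNReal.ofNat_ne_top]
  have hpt : ∀ x : Pt, ‖fmap R ε x - e3‖ₑ ^ ((2:ℝ≥0∞).toReal)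
      = ENNReal.ofReal (‖fmap R ε x - e3‖ ^ 2) := by
    intro x
    rw [ENNReal.toReal_ofNat, ENNReal.rpow_two, ENNReal.ofReal_pow (norm_nonneg _),
      ofReal_norm]
  rw [lintegral_congr hpt,
    ← MeasureTheory.ofReal_integral_eq_lintegral_ofReal (norm_sq_integrable R ε hR)
      (Filter.Eventually.of_forall fun x => sq_nonneg _)]
  have hmono : ENNReal.ofReal (∫ p : Pt, ‖fmap R ε p - e3‖ ^ 2)
      ≤ ENNReal.ofReal ((ε * (R * Ib)) ^ 2) := by
    apply ENNReal.ofReal_le_ofReal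
    calc ∫ p : Pt, ‖fmap R ε p - e3‖ ^ 2 ≤ ε ^ 2 * (R * Ib) ^ 2 := int_norm_sq_le R ε hR
    _ = (ε * (R * Ib)) ^ 2 := by ring
  calc (ENNReal.ofReal (∫ p : Pt, ‖fmap R ε p - e3‖ ^ 2)) ^ (1 / (2:ℝ≥0∞).toReal)
      ≤ (ENNReal.ofReal ((ε * (R * Ib)) ^ 2)) ^ (1 / (2:ℝ≥0∞).toReal) := by
        rw [ENNReal.toReal_ofNat]
        exact ENNReal.rpow_le_rpow hmono (by norm_num)
  _ = ENNReal.ofReal (ε * (R * Ib)) := by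
        rw [ENNReal.toReal_ofNat,
          ENNReal.ofReal_rpow_of_nonneg (x := (ε * (R * Ib)) ^ 2) (by positivity) (by norm_num)]
        congr 1
        rw [← Real.sqrt_eq_rpow, Real.sqrt_sq (mul_nonneg hε (mul_nonneg hR.le Ib_pos.le))]

lemma T1_pos (hR : 0 < R) (hε : 0 < ε) (hε1 : ε ≤ 1) :
    0 < eLpNorm (fun p : Pt => (nmap R ε hR).f p - e3) 2 volume := by
  have hg : (fun p : Pt => (nmap R ε hR).f p - e3) = fun p : Pt => fmap R ε p - e3 := rfl
  rw [hg, pos_iff_ne_zero]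
  intro hcon
  have hcont : Continuous fun p : Pt => fmap R ε p - e3 := (fmap_cont R ε).sub continuous_const
  have hae : (fun p : Pt => fmap R ε p - e3) =ᵐ[volume] (fun _ : Pt => (0:E3)) :=
    (eLpNorm_eq_zero_iff hcont.aestronglyMeasurable two_ne_zero).mp hcon
  have heq : (fun p : Pt => fmap R ε p - e3) = fun _ : Pt => (0:E3) :=
    (Continuous.ae_eq_iff_eq volume hcont continuous_const).mp hae
  have hth0 : th R ε (0, 0) = ε := by
    rw [th]
    show ε * (c R 0 * c R 0) = ε
    rw [c_zero]
    ring
  have hsin : Real.sin (th R ε (0,0)) = 0 := by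
    have := congrFun heq (0, 0)
    have h0 : (fmap R ε (0,0) - e3) 0 = 0 := by rw [this]; rfl
    rwa [fmap_sub_e3, mk3_apply_zero] at h0
  rw [hth0] at hsin
  have : 0 < Real.sin ε :=
    Real.sin_pos_of_pos_of_lt_pi hε (lt_of_le_of_lt hε1 (by nlinarith [Real.pi_gt_three]))
  linarith

lemma T2_eq (hR : 0 < R) (hε : 0 ≤ ε) :
    (∫⁻ p : Pt, ENNReal.ofReal (gradSq (nmap R ε hR) p)) ^ (1/2 : ℝ)
      = ENNReal.ofReal (ε * Real.sqrt (2 * (Ib' * Ib))) := by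
  rw [← MeasureTheory.ofReal_integral_eq_lintegral_ofReal (gradSq_integrable R ε hR)
      (Filter.Eventually.of_forall fun p => by
        have h := gradSq_nmap R ε hR p
        simp only [Pi.zero_apply]
        rw [h]
        positivity),
    int_gradSq R ε hR,
    ENNReal.ofReal_rpow_of_nonneg (x := 2 * ε ^ 2 * (Ib' * Ib))
      (mul_nonneg (by positivity) (mul_nonneg Ib'_nonneg Ib_pos.le)) (by norm_num)]
  congr 1
  rw [← Real.sqrt_eq_rpow]
  have h1 : 2 * ε ^ 2 * (Ib' * Ib) = ε ^ 2 * (2 * (Ib' * Ib)) := by ring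
  rw [h1, Real.sqrt_mul (sq_nonneg ε), Real.sqrt_sq hε]

end Profile

end NotMinAux
open NotMinAux

theorem homogeneous_state_not_local_min_subcritical (r h : ℝ) (hr : 0 < r) (hh : h < 0) :
    ∀ δ : ℝ, 0 < δ → ∃ n : SMap, MemM' n ∧ 0 < dMe3 n ∧ dMe3 n ≤ ENNReal.ofReal δ ∧
      Enh r h n < 0 := by
  intro δ hδ
  have hB := Ib_pos
  have hA := Ib'_nonneg
  have hnh : (0:ℝ) < -h := neg_pos.mpr hh
  set a : ℝ := 50 * (Ib' + 1) / ((-h) * Ib) with ha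
  have hden : (0:ℝ) < (-h) * Ib := mul_pos hnh hB
  have ha0 : 0 ≤ a := div_nonneg (by nlinarith) hden.le
  set R : ℝ := Real.sqrt a + 1 with hRdef
  have hR : 0 < R := by positivity
  have hRsq : a ≤ R ^ 2 := by nlinarith [Real.sq_sqrt ha0, Real.sqrt_nonneg a]
  set D : ℝ := R * Ib + Real.sqrt (2 * (Ib' * Ib)) with hD
  have hD0 : 0 ≤ D := add_nonneg (mul_pos hR hB).le (Real.sqrt_nonneg _)
  set ε : ℝ := min 1 (min (Real.sqrt (-h)) (δ / (D + 1))) with hεdef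
  have hεpos : 0 < ε :=
    lt_min one_pos (lt_min (Real.sqrt_pos.mpr hnh) (div_pos hδ (by linarith)))
  have hε1 : ε ≤ 1 := min_le_left _ _
  have hεh : ε ^ 2 ≤ -h := by
    have h1 : ε ≤ Real.sqrt (-h) := le_trans (min_le_right _ _) (min_le_left _ _)
    nlinarith [Real.sq_sqrt hnh.le, hεpos]
  have hεδ : ε * D ≤ δ := by
    have h1 : ε ≤ δ / (D + 1) := le_trans (min_le_right _ _) (min_le_right _ _)
    have h2 : ε * (D + 1) ≤ δ := (le_div_iff₀ (by linarith)).mp h1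
    nlinarith
  clear_value a R D ε
  refine ⟨nmap R ε hR, memM'_nmap R ε hR, ?_, ?_, ?_⟩
  · rw [dMe3]
    calc (0:ℝ≥0∞) < eLpNorm (fun p : Pt => (nmap R ε hR).f p - e3) 2 volume :=
          T1_pos R ε hR hεpos hε1
    _ ≤ _ := le_self_add
  · rw [dMe3]
    calc eLpNorm (fun p : Pt => (nmap R ε hR).f p - e3) 2 volume
          + (∫⁻ p : Pt, ENNReal.ofReal (gradSq (nmap R ε hR) p)) ^ (1/2 : ℝ)
        ≤ ENNReal.ofReal (ε * (R * Ib)) + ENNReal.ofReal (ε * Real.sqrt (2 * (Ib' * Ib))) :=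
          add_le_add (T1_le R ε hR hεpos.le) (le_of_eq (T2_eq R ε hR hεpos.le))
    _ = ENNReal.ofReal (ε * (R * Ib) + ε * Real.sqrt (2 * (Ib' * Ib))) :=
          (ENNReal.ofReal_add (mul_nonneg hεpos.le (mul_pos hR hB).le)
            (mul_nonneg hεpos.le (Real.sqrt_nonneg _))).symm
    _ ≤ ENNReal.ofReal δ := by
          apply ENNReal.ofReal_le_ofReal
          calc ε * (R * Ib) + ε * Real.sqrt (2 * (Ib' * Ib)) = ε * D := by rw [hD]; ring
          _ ≤ δ := hεδ
  · rw [Enh, En, Dir_nmap R ε hR, Hel_nmap R ε hR]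
    have hPot := Pot_le R ε hR hεpos hε1
    have hZee := Zee_ge R ε hR hεpos hε1
    have hhZ : h * Zee (nmap R ε hR) ≤ h * (ε ^ 2 / 5 * (R * Ib) ^ 2) :=
      mul_le_mul_of_nonpos_left hZee hh.le
    have hKpos : (0:ℝ) < (R * Ib) ^ 2 := by positivity
    have e2 : (0:ℝ) < ε ^ 2 := by positivity
    have hP' : Pot (nmap R ε hR) ≤ (-h) * ε ^ 2 * (R * Ib) ^ 2 / 8 := by
      refine le_trans hPot ?_
      nlinarith [mul_le_mul_of_nonneg_right hεh e2.le]
    have hval : a * ((-h) * Ib) = 50 * (Ib' + 1) := by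
      rw [ha]; exact div_mul_cancel₀ _ hden.ne'
    have h2 : 50 * (Ib' + 1) ≤ (-h) * Ib * R ^ 2 := by
      have hm := mul_le_mul_of_nonneg_right hRsq hden.le
      rw [hval] at hm
      have hrr : R ^ 2 * (-h * Ib) = (-h) * Ib * R ^ 2 := by ring
      linarith [hm, hrr.le, hrr.ge]
    have h3 : 50 * (Ib' + 1) * Ib ≤ (-h) * (R * Ib) ^ 2 := by
      have hm := mul_le_mul_of_nonneg_right h2 hB.le
      have hrr : (-h) * Ib * R ^ 2 * Ib = (-h) * (R * Ib) ^ 2 := by ring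
      linarith [hm]
    have h4 : ε ^ 2 * (50 * (Ib' + 1) * Ib) ≤ ε ^ 2 * ((-h) * (R * Ib) ^ 2) :=
      mul_le_mul_of_nonneg_left h3 e2.le
    have h5 : 0 ≤ ε ^ 2 * (Ib' * Ib) := mul_nonneg e2.le (mul_nonneg hA hB.le)
    have h6 : 0 < ε ^ 2 * Ib := mul_pos e2 hB
    have hZ' : h * Zee (nmap R ε hR) ≤ -(ε ^ 2 * ((-h) * (R * Ib) ^ 2)) / 5 := by
      have hre : h * (ε ^ 2 / 5 * (R * Ib) ^ 2) = -(ε ^ 2 * ((-h) * (R * Ib) ^ 2)) / 5 := by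
        ring
      linarith [hhZ]
    have hP'' : Pot (nmap R ε hR) ≤ (ε ^ 2 * ((-h) * (R * Ib) ^ 2)) / 8 := by
      have hre : (-h) * ε ^ 2 * (R * Ib) ^ 2 / 8 = (ε ^ 2 * ((-h) * (R * Ib) ^ 2)) / 8 := by
        ring
      linarith [hP']
    linarith [hP'', hZ', h4, h5, h6]

end
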